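/- Let n be even, A ∈ F_2^{n×n} invertible, B := (A^T)^{-1}, a ∈ F_2^n, b := B^T·[B_2; B_1]·a (where M_1, M_2 denote the top and bottom n/2 × n halves of a matrix M). For any h : F_2^{n/2} → F_2 define f(x) := ⟨A_1 x, A_2 x⟩ + ⟨x,a⟩ + h(A_2 x) and g(y) := ⟨B_1 y, B_2 y⟩ + ⟨y,b⟩ + h(B_1 y + B_1 a) + ⟨B_1 a, B_2 a⟩. Then for every y ∈ F_2^n, \widehat{χ_f}(y) = 2^{-n/2}·χ_g(y). -/

import Mathlib

open Matrix

/-- `χ(b) = (-1)^b` for `b : 𝔽₂`. -/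
noncomputable def chiSign (b : ZMod 2) : ℝ := (-1 : ℝ) ^ b.val

/-- Inner product mod 2. -/
def ipF2 {ι : Type*} [Fintype ι] (u v : ι → ZMod 2) : ZMod 2 := ∑ i, u i * v i

lemma zmod2_cases (p : ZMod 2) : p = 0 ∨ p = 1 := by revert p; decide

lemma chiSign_eq (p : ZMod 2) : chiSign p = if p = 0 then 1 else -1 := by
  rcases zmod2_cases p with rfl | rfl
  · simp [chiSign]
  · rw [if_neg (by decide)]
    norm_num [chiSign, ZMod.val_one]

lemma chiSign_add (p q : ZMod 2) : chiSign (p + q) = chiSign p * chiSign q := by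
  rcases zmod2_cases p with rfl | rfl <;> rcases zmod2_cases q with rfl | rfl
  · simp [chiSign_eq]
  · simp [chiSign_eq]
  · simp [chiSign_eq]
  · rw [show (1 + 1 : ZMod 2) = 0 by decide]
    simp [chiSign_eq]

lemma chiSign_zero : chiSign 0 = 1 := by norm_num [chiSign]

lemma chiSign_one : chiSign 1 = -1 := by norm_num [chiSign, ZMod.val_one]

lemma ipF2_eq_dot {ι : Type*} [Fintype ι] (u v : ι → ZMod 2) : ipF2 u v = u ⬝ᵥ v := rfl

lemma ipF2_comm {ι : Type*} [Fintype ι] (u v : ι → ZMod 2) : ipF2 u v = ipF2 v u := by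
  simp [ipF2, mul_comm]

lemma ipF2_add_right {ι : Type*} [Fintype ι] (u v w : ι → ZMod 2) :
    ipF2 u (v + w) = ipF2 u v + ipF2 u w := by
  simp [ipF2, mul_add, Finset.sum_add_distrib]

lemma ipF2_add_left {ι : Type*} [Fintype ι] (u v w : ι → ZMod 2) :
    ipF2 (u + v) w = ipF2 u w + ipF2 v w := by
  simp [ipF2, add_mul, Finset.sum_add_distrib]

lemma ipF2_mulVec_transpose {ι : Type*} [Fintype ι] (M : Matrix ι ι (ZMod 2))
    (u w : ι → ZMod 2) : ipF2 u (Mᵀ.mulVec w) = ipF2 (M.mulVec u) w := by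
  rw [ipF2_eq_dot, ipF2_eq_dot, Matrix.dotProduct_mulVec, Matrix.vecMul_transpose,
    dotProduct_comm]

lemma submatrix_mulVec_comp {ι κ : Type*} [Fintype ι] (M : Matrix ι ι (ZMod 2))
    (e : κ → ι) (v : ι → ZMod 2) :
    (M.submatrix e id).mulVec v = (M.mulVec v) ∘ e := rfl

lemma ipF2_sum_type {α β : Type*} [Fintype α] [Fintype β]
    (u v : α ⊕ β → ZMod 2) :
    ipF2 u v = ipF2 (u ∘ Sum.inl) (v ∘ Sum.inl) + ipF2 (u ∘ Sum.inr) (v ∘ Sum.inr) := by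
  simp [ipF2, Fintype.sum_sum_type, Function.comp]

lemma vec_add_eq_zero_iff {ι : Type*} (v s : ι → ZMod 2) : v + s = 0 ↔ v = s := by
  have key : ∀ p q : ZMod 2, p + q = 0 ↔ p = q := by decide
  constructor
  · intro H; funext j; exact (key _ _).mp (congrFun H j)
  · rintro rfl; funext j; exact (key _ _).mpr rfl

lemma sum_chi_orth (m : ℕ) (v : Fin m → ZMod 2) :
    ∑ u : Fin m → ZMod 2, chiSign (ipF2 u v) = if v = 0 then (2 : ℝ) ^ m else 0 := by
  split_ifs with hv
  · subst hv
    simp [ipF2, chiSign]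
  · obtain ⟨i, hi⟩ : ∃ i, v i ≠ 0 := by
      by_contra hc
      push_neg at hc
      exact hv (funext hc)
    have hvi : v i = 1 := (zmod2_cases (v i)).resolve_left hi
    have hone : (1 : ZMod 2) + 1 = 0 := by decide
    refine Finset.sum_ninvolution (fun u => Function.update u i (u i + 1)) ?_ ?_
      (fun _ => Finset.mem_univ _) ?_
    · intro u
      have key : ipF2 (Function.update u i (u i + 1)) v = ipF2 u v + 1 := by
        have hterm : ∀ j, Function.update u i (u i + 1) j * v j
            = u j * v j + if j = i then v j else 0 := by
          intro j
          rcases eq_or_ne j i with rfl | hj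
          · rw [Function.update_self, if_pos rfl, add_mul, one_mul]
          · rw [Function.update_of_ne hj, if_neg hj, add_zero]
        rw [ipF2]
        simp only [hterm, Finset.sum_add_distrib, Finset.sum_ite_eq' Finset.univ i,
          Finset.mem_univ, if_true, hvi]
        rfl
      rw [key, chiSign_add, chiSign_one]
      ring
    · intro u _ hcon
      have h2 := congrFun hcon i
      simp only [Function.update_self] at h2
      exact one_ne_zero (by linear_combination h2)
    · intro u
      funext j
      rcases eq_or_ne j i with rfl | hj
      · simp [Function.update_self, add_assoc, hone]
      · simp [Function.update_of_ne hj]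

theorem stmt5 (m : ℕ)
    (A B : Matrix (Fin m ⊕ Fin m) (Fin m ⊕ Fin m) (ZMod 2))
    (hA : IsUnit A) (hB : B = (Aᵀ)⁻¹)
    (a b : Fin m ⊕ Fin m → ZMod 2)
    (hb : b = Bᵀ.mulVec
      ((Matrix.fromRows (B.submatrix Sum.inr id) (B.submatrix Sum.inl id)).mulVec a))
    (h : (Fin m → ZMod 2) → ZMod 2)
    (f g : (Fin m ⊕ Fin m → ZMod 2) → ZMod 2)
    (hf : ∀ x, f x =
      ipF2 ((A.submatrix Sum.inl id).mulVec x) ((A.submatrix Sum.inr id).mulVec x)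
        + ipF2 x a + h ((A.submatrix Sum.inr id).mulVec x))
    (hg : ∀ y, g y =
      ipF2 ((B.submatrix Sum.inl id).mulVec y) ((B.submatrix Sum.inr id).mulVec y)
        + ipF2 y b
        + h ((B.submatrix Sum.inl id).mulVec y + (B.submatrix Sum.inl id).mulVec a)
        + ipF2 ((B.submatrix Sum.inl id).mulVec a) ((B.submatrix Sum.inr id).mulVec a)) :
    ∀ y : Fin m ⊕ Fin m → ZMod 2,
      (2 : ℝ) ^ (-(2 * m : ℤ)) *
          ∑ x : Fin m ⊕ Fin m → ZMod 2, chiSign (f x) * chiSign (ipF2 x y)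
        = (2 : ℝ) ^ (-(m : ℤ)) * chiSign (g y) := by
  intro y
  have hAdet : IsUnit A.det := (Matrix.isUnit_iff_isUnit_det A).mp hA
  have hBt : Bᵀ = A⁻¹ := by
    rw [hB, Matrix.transpose_nonsing_inv, Matrix.transpose_transpose]
  have hAAi : A * A⁻¹ = 1 := Matrix.mul_nonsing_inv _ hAdet
  have hBAi : B = (A⁻¹)ᵀ := by rw [← hBt, Matrix.transpose_transpose]
  have hbij : Function.Bijective (fun z : Fin m ⊕ Fin m → ZMod 2 => (A⁻¹).mulVec z) := by
    refine Function.bijective_iff_has_inverse.mpr ⟨fun x => A.mulVec x, ?_, ?_⟩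
    · intro z
      simp only [Matrix.mulVec_mulVec, hAAi, Matrix.one_mulVec]
    · intro x
      simp only [Matrix.mulVec_mulVec, Matrix.nonsing_inv_mul _ hAdet, Matrix.one_mulVec]
  set c : Fin m ⊕ Fin m → ZMod 2 := B.mulVec (a + y) with hc
  set s : Fin m → ZMod 2 := c ∘ Sum.inl with hs
  set t : Fin m → ZMod 2 := c ∘ Sum.inr with ht
  have step1 : ∑ x : Fin m ⊕ Fin m → ZMod 2, chiSign (f x) * chiSign (ipF2 x y)
      = ∑ z : Fin m ⊕ Fin m → ZMod 2,
          chiSign (ipF2 (z ∘ Sum.inl) (z ∘ Sum.inr) + h (z ∘ Sum.inr) + ipF2 z c) := by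
    rw [← Function.Bijective.sum_comp hbij
      (fun x => chiSign (f x) * chiSign (ipF2 x y))]
    refine Finset.sum_congr rfl fun z _ => ?_
    rw [← chiSign_add]
    congr 1
    have h1 : (A.submatrix Sum.inl id).mulVec ((A⁻¹).mulVec z) = z ∘ Sum.inl := by
      rw [submatrix_mulVec_comp, Matrix.mulVec_mulVec, hAAi, Matrix.one_mulVec]
    have h2 : (A.submatrix Sum.inr id).mulVec ((A⁻¹).mulVec z) = z ∘ Sum.inr := by
      rw [submatrix_mulVec_comp, Matrix.mulVec_mulVec, hAAi, Matrix.one_mulVec]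
    have h3 : ipF2 ((A⁻¹).mulVec z) a + ipF2 ((A⁻¹).mulVec z) y = ipF2 z c := by
      rw [← ipF2_add_right, hc, hBAi, ipF2_mulVec_transpose]
    rw [hf, h1, h2, ← h3]
    ring
  have step2 : ∑ z : Fin m ⊕ Fin m → ZMod 2,
      chiSign (ipF2 (z ∘ Sum.inl) (z ∘ Sum.inr) + h (z ∘ Sum.inr) + ipF2 z c)
      = (2 : ℝ) ^ m * chiSign (ipF2 s t + h s) := by
    rw [← Equiv.sum_comp (Equiv.sumArrowEquivProdArrow (Fin m) (Fin m) (ZMod 2)).symm]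
    rw [Fintype.sum_prod_type_right]
    have inner : ∀ v : Fin m → ZMod 2,
        (∑ u : Fin m → ZMod 2,
          chiSign (ipF2 ((Equiv.sumArrowEquivProdArrow (Fin m) (Fin m) (ZMod 2)).symm (u, v) ∘ Sum.inl)
            ((Equiv.sumArrowEquivProdArrow (Fin m) (Fin m) (ZMod 2)).symm (u, v) ∘ Sum.inr)
            + h ((Equiv.sumArrowEquivProdArrow (Fin m) (Fin m) (ZMod 2)).symm (u, v) ∘ Sum.inr)
            + ipF2 ((Equiv.sumArrowEquivProdArrow (Fin m) (Fin m) (ZMod 2)).symm (u, v)) c))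
        = (if v = s then (2:ℝ)^m * chiSign (h v + ipF2 v t) else 0) := by
      intro v
      have hcomp_l : ∀ u : Fin m → ZMod 2,
          (Equiv.sumArrowEquivProdArrow (Fin m) (Fin m) (ZMod 2)).symm (u, v) ∘ Sum.inl = u := by
        intro u; funext i; rfl
      have hcomp_r : ∀ u : Fin m → ZMod 2,
          (Equiv.sumArrowEquivProdArrow (Fin m) (Fin m) (ZMod 2)).symm (u, v) ∘ Sum.inr = v := by
        intro u; funext i; rfl
      have main : (∑ u : Fin m → ZMod 2,
          chiSign (ipF2 ((Equiv.sumArrowEquivProdArrow (Fin m) (Fin m) (ZMod 2)).symm (u, v) ∘ Sum.inl)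
            ((Equiv.sumArrowEquivProdArrow (Fin m) (Fin m) (ZMod 2)).symm (u, v) ∘ Sum.inr)
            + h ((Equiv.sumArrowEquivProdArrow (Fin m) (Fin m) (ZMod 2)).symm (u, v) ∘ Sum.inr)
            + ipF2 ((Equiv.sumArrowEquivProdArrow (Fin m) (Fin m) (ZMod 2)).symm (u, v)) c))
          = (∑ u : Fin m → ZMod 2, chiSign (ipF2 u (v + s))) * chiSign (h v + ipF2 v t) := by
        rw [Finset.sum_mul]
        refine Finset.sum_congr rfl fun u _ => ?_
        rw [← chiSign_add]
        congr 1
        have hz := ipF2_sum_type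
          ((Equiv.sumArrowEquivProdArrow (Fin m) (Fin m) (ZMod 2)).symm (u, v)) c
        rw [hcomp_l u, hcomp_r u] at hz
        rw [hz, hcomp_l u, hcomp_r u, ← hs, ← ht, ipF2_add_right]
        ring
      rw [main, sum_chi_orth, ite_mul, zero_mul]
      simp only [vec_add_eq_zero_iff]
    rw [Finset.sum_congr rfl (fun v _ => inner v),
      Finset.sum_ite_eq' Finset.univ s (fun v => (2:ℝ)^m * chiSign (h v + ipF2 v t))]
    rw [if_pos (Finset.mem_univ s), add_comm (h s) (ipF2 s t)]
  rw [step1, step2]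
  -- identify the exponent with g y
  have hs' : s = (B.submatrix Sum.inl id).mulVec a + (B.submatrix Sum.inl id).mulVec y := by
    rw [hs, hc, ← submatrix_mulVec_comp, Matrix.mulVec_add]
  have ht' : t = (B.submatrix Sum.inr id).mulVec a + (B.submatrix Sum.inr id).mulVec y := by
    rw [ht, hc, ← submatrix_mulVec_comp, Matrix.mulVec_add]
  have hyb : ipF2 y b
      = ipF2 ((B.submatrix Sum.inl id).mulVec y) ((B.submatrix Sum.inr id).mulVec a)
        + ipF2 ((B.submatrix Sum.inr id).mulVec y) ((B.submatrix Sum.inl id).mulVec a) := by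
    rw [hb, ipF2_mulVec_transpose, Matrix.fromRows_mulVec, ipF2_sum_type,
      Sum.elim_comp_inl, Sum.elim_comp_inr, ← submatrix_mulVec_comp, ← submatrix_mulVec_comp]
  have hgy : g y = ipF2 s t + h s := by
    rw [hg y, hyb, hs', ht',
      add_comm ((B.submatrix Sum.inl id).mulVec y) ((B.submatrix Sum.inl id).mulVec a),
      ipF2_add_left, ipF2_add_right, ipF2_add_right,
      ipF2_comm ((B.submatrix Sum.inr id).mulVec y) ((B.submatrix Sum.inl id).mulVec a)]
    ring
  rw [hgy, ← mul_assoc]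
  congr 1
  rw [show ((2:ℝ)^m) = (2:ℝ)^(m:ℤ) from (zpow_natCast 2 m).symm,
    ← zpow_add₀ (by norm_num : (2:ℝ) ≠ 0)]
  congr 1
  ring
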